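/- arXiv:2103.11330 — 4 statements merged into one kernel-verified Lean document; each statement's English description precedes it below -/
import Mathlib

section
/- Let δ > 0 and α ∈ (0, δ). Define S_n for n ≥ 1 by S_1 = (1/δ)·∑_{i=1}^∞ (1/i)·(α/δ)^{i-1} and the recursion α·S_{n+1} − δ·S_n = −1/n for n ≥ 1. Then for all n ≥ 1, S_n = (1/(δn))·∑_{i=0}^∞ (n/(n+i))·(α/δ)^i, and consequently 1/(δn) ≤ S_n ≤ 1/((δ−α)·n). -/
/-- Closed form and sandwich bounds for the hitting-time increments `S_n = E[T_n] − E[T_{n−1}]`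
of the constant-rate birth-death chain: with
`S_1 = (1/δ)·∑_{i=1}^∞ (1/i)(α/δ)^{i−1}` and `α·S_{n+1} − δ·S_n = −1/n`, one has
`S_n = (1/(δn))·∑_{i=0}^∞ (n/(n+i))(α/δ)^i` and `1/(δn) ≤ S_n ≤ 1/((δ−α)n)`. -/
theorem hitting_increment_closed_form
    (δ α : ℝ) (hδ : 0 < δ) (hα : 0 < α) (hαδ : α < δ)
    (S : ℕ → ℝ)
    (hS1 : S 1 = (1 / δ) * ∑' i : ℕ, (1 / (i + 1 : ℝ)) * (α / δ) ^ i)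
    (hrec : ∀ n : ℕ, 1 ≤ n → α * S (n + 1) - δ * S n = -(1 / (n : ℝ))) :
    ∀ n : ℕ, 1 ≤ n →
      S n = (1 / (δ * n)) * ∑' i : ℕ, ((n : ℝ) / ((n : ℝ) + i)) * (α / δ) ^ i ∧
      1 / (δ * n) ≤ S n ∧ S n ≤ 1 / ((δ - α) * n) := by
  set r : ℝ := α / δ with hr_def
  have hr0 : 0 < r := div_pos hα hδ
  have hr1 : r < 1 := (div_lt_one hδ).mpr hαδ
  have hgeo : Summable (fun i : ℕ => r ^ i) := summable_geometric_of_lt_one hr0.le hr1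
  have hpos : ∀ (n : ℕ), 1 ≤ n → ∀ (i : ℕ), (0:ℝ) < (n:ℝ) + i := by
    intro n hn i
    have h1 : (1:ℝ) ≤ (n:ℝ) := by exact_mod_cast hn
    have := Nat.cast_nonneg (α := ℝ) i
    linarith
  have hle : ∀ (n : ℕ), 1 ≤ n → ∀ (i : ℕ),
      (1 / ((n:ℝ) + i)) * r ^ i ≤ (1 / (n:ℝ)) * r ^ i := by
    intro n hn i
    have h0 : (0:ℝ) < (n:ℝ) := by exact_mod_cast hn
    have h1 := hpos n hn i
    have := Nat.cast_nonneg (α := ℝ) i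
    gcongr
    linarith
  have hsum : ∀ (n : ℕ), 1 ≤ n → Summable (fun i : ℕ => (1 / ((n:ℝ) + i)) * r ^ i) := by
    intro n hn
    apply Summable.of_nonneg_of_le (fun i => by positivity) (hle n hn)
    exact hgeo.mul_left _
  have hrecA : ∀ (n : ℕ), 1 ≤ n →
      (∑' i : ℕ, (1 / ((n:ℝ) + i)) * r ^ i)
        = 1/(n:ℝ) + r * ∑' i : ℕ, (1 / (((n:ℕ)+1:ℝ) + i)) * r ^ i := by
    intro n hn
    rw [Summable.tsum_eq_zero_add (hsum n hn)]
    congr 1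
    · simp
    · have : ∀ i : ℕ, (1 / ((n:ℝ) + (i+1:ℕ))) * r ^ (i+1)
          = r * ((1 / (((n:ℕ)+1:ℝ) + i)) * r ^ i) := by
        intro i
        push_cast
        ring
      rw [tsum_congr this, tsum_mul_left]
  have hmain : ∀ (n : ℕ), 1 ≤ n →
      S n = (1/δ) * ∑' i : ℕ, (1 / ((n:ℝ) + i)) * r ^ i := by
    intro n hn
    induction n, hn using Nat.le_induction with
    | base =>
      rw [hS1]
      congr 1
      exact tsum_congr fun i => by rw [add_comm (i:ℝ) 1]; norm_num
    | succ n hn ih =>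
      have h1 := hrec n hn
      have hδ' : δ ≠ 0 := ne_of_gt hδ
      rw [ih, hrecA n hn] at h1
      set B := ∑' i : ℕ, (1 / ((n:ℝ) + 1 + i)) * r ^ i with hB
      have hαS : α * S (n+1) = α * ((1/δ) * B) := by
        have hn0 : (n:ℝ) ≠ 0 := Nat.cast_ne_zero.mpr (by omega)
        have he : δ * (1/δ * (1/(n:ℝ) + r*B)) = 1/(n:ℝ) + r*B := by
          field_simp
        rw [he] at h1
        have h3 : α * S (n+1) = r * B := by linarith
        rw [h3, hr_def]; ring
      have h4 := mul_left_cancel₀ (ne_of_gt hα) hαS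
      push_cast
      exact h4
  intro n hn
  have hAn := hmain n hn
  have hn0 : (0:ℝ) < (n:ℝ) := by exact_mod_cast hn
  have heq : (∑' i : ℕ, ((n:ℝ) / ((n:ℝ) + i)) * r ^ i)
      = (n:ℝ) * ∑' i : ℕ, (1 / ((n:ℝ) + i)) * r ^ i := by
    rw [← tsum_mul_left]
    exact tsum_congr fun i => by ring
  have hclosed : S n = (1 / (δ * n)) * ∑' i : ℕ, ((n:ℝ) / ((n:ℝ) + i)) * r ^ i := by
    rw [heq, hAn]
    field_simp
  refine ⟨hclosed, ?_, ?_⟩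
  · -- lower bound
    have hfirst : (1/((n:ℝ)+((0:ℕ):ℝ))) * r ^ (0:ℕ) ≤ ∑' i : ℕ, (1 / ((n:ℝ) + i)) * r ^ i :=
      Summable.le_tsum (hsum n hn) 0 (fun i _ => by positivity)
    simp only [Nat.cast_zero, add_zero, pow_zero, mul_one] at hfirst
    rw [hAn]
    have h2 : 1/(δ*(n:ℝ)) = (1/δ) * (1/(n:ℝ)) := by field_simp
    rw [h2]
    gcongr
  · -- upper bound
    have hub : (∑' i : ℕ, (1 / ((n:ℝ) + i)) * r ^ i) ≤ (1/(n:ℝ)) * (1-r)⁻¹ := by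
      have h := Summable.tsum_le_tsum (hle n hn) (hsum n hn) (hgeo.mul_left (1/(n:ℝ)))
      rwa [tsum_mul_left, tsum_geometric_of_lt_one hr0.le hr1] at h
    have hkey : (1/δ) * ((1/(n:ℝ)) * (1-r)⁻¹) = 1/((δ-α)*(n:ℝ)) := by
      rw [hr_def]
      have h1 : δ ≠ 0 := ne_of_gt hδ
      have h2 : δ - α ≠ 0 := ne_of_gt (by linarith)
      have h3 : (n:ℝ) ≠ 0 := by positivity
      field_simp
    rw [hAn, ← hkey]
    gcongr
end

section
/- Let δ > 0 and α ∈ (0, δ), and define E[T_n] = ∑_{k=1}^n S_k where S_k = (1/(δk))·∑_{i=0}^∞ (k/(k+i))·(α/δ)^i. Then ln(n+1)/δ ≤ E[T_n] ≤ (1 + ln n)/(δ−α) for all n ≥ 1. -/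
/-!
Each weight `k / (k + i)` lies in `[0, 1]` and equals `1` at `i = 0`, so the inner series lies
between its first term `1` and the geometric series `(1 - α/δ)⁻¹ = δ / (δ - α)`. Hence
`1/(δk) ≤ S_k ≤ 1/((δ - α)k)`, and summing over `k` reduces both bounds to the harmonic-number
bounds `log (n + 1) ≤ H_n ≤ 1 + log n`.
-/

open Finset

section WeightedGeometric

variable {r k : ℝ}

lemma div_add_mul_pow_nonneg (hr : 0 ≤ r) (hk : 0 ≤ k) (i : ℕ) : 0 ≤ k / (k + i) * r ^ i := by
  positivity

lemma div_add_mul_pow_le_pow (hr : 0 ≤ r) (hk : 0 ≤ k) (i : ℕ) : k / (k + i) * r ^ i ≤ r ^ i := by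
  refine mul_le_of_le_one_left (pow_nonneg hr i) (div_le_one_of_le₀ ?_ (by positivity))
  linarith [i.cast_nonneg (α := ℝ)]

lemma summable_div_add_mul_pow (hr0 : 0 ≤ r) (hr1 : r < 1) (hk : 0 ≤ k) :
    Summable fun i : ℕ => k / (k + i) * r ^ i :=
  (summable_geometric_of_lt_one hr0 hr1).of_nonneg_of_le (div_add_mul_pow_nonneg hr0 hk)
    (div_add_mul_pow_le_pow hr0 hk)

lemma one_le_tsum_div_add_mul_pow (hr0 : 0 ≤ r) (hr1 : r < 1) (hk : 0 < k) :
    1 ≤ ∑' i : ℕ, k / (k + i) * r ^ i := by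
  simpa [hk.ne'] using
    (summable_div_add_mul_pow hr0 hr1 hk.le).le_tsum 0 fun i _ => div_add_mul_pow_nonneg hr0 hk.le i

lemma tsum_div_add_mul_pow_le (hr0 : 0 ≤ r) (hr1 : r < 1) (hk : 0 ≤ k) :
    ∑' i : ℕ, k / (k + i) * r ^ i ≤ (1 - r)⁻¹ :=
  calc ∑' i : ℕ, k / (k + i) * r ^ i ≤ ∑' i : ℕ, r ^ i :=
        (summable_div_add_mul_pow hr0 hr1 hk).tsum_le_tsum (div_add_mul_pow_le_pow hr0 hk)
          (summable_geometric_of_lt_one hr0 hr1)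
    _ = (1 - r)⁻¹ := tsum_geometric_of_lt_one hr0 hr1

end WeightedGeometric

lemma sum_Icc_one_div_mul_eq_harmonic_div (c : ℝ) (n : ℕ) :
    ∑ k ∈ Icc 1 n, 1 / (c * k) = harmonic n / c := by
  simp [harmonic_eq_sum_Icc, div_eq_mul_inv, mul_comm, mul_sum]

theorem extinction_time_log_bounds_general
    (δ α : ℝ) (hδ : 0 < δ) (hα : 0 < α) (hαδ : α < δ) (n : ℕ) :
    Real.log (n + 1) / δ ≤
      (∑ k ∈ Finset.Icc 1 n,
        (1 / (δ * k)) * ∑' i : ℕ, ((k : ℝ) / ((k : ℝ) + i)) * (α / δ) ^ i) ∧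
    (∑ k ∈ Finset.Icc 1 n,
        (1 / (δ * k)) * ∑' i : ℕ, ((k : ℝ) / ((k : ℝ) + i)) * (α / δ) ^ i) ≤
      (1 + Real.log n) / (δ - α) := by
  have hr0 : 0 ≤ α / δ := (div_pos hα hδ).le
  have hr1 : α / δ < 1 := (div_lt_one hδ).mpr hαδ
  have hδα : 0 < δ - α := sub_pos.mpr hαδ
  constructor
  · calc Real.log (n + 1) / δ ≤ harmonic n / δ := by
          gcongr; exact_mod_cast log_add_one_le_harmonic n
      _ = ∑ k ∈ Icc 1 n, 1 / (δ * k) := (sum_Icc_one_div_mul_eq_harmonic_div δ n).symm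
      _ ≤ _ := sum_le_sum fun k hk => le_mul_of_one_le_right (by positivity)
          (one_le_tsum_div_add_mul_pow hr0 hr1 (Nat.cast_pos.mpr (mem_Icc.mp hk).1))
  · calc _ ≤ ∑ k ∈ Icc 1 n, 1 / (δ * k) * (1 - α / δ)⁻¹ := sum_le_sum fun k _ =>
          mul_le_mul_of_nonneg_left (tsum_div_add_mul_pow_le hr0 hr1 k.cast_nonneg) (by positivity)
      _ = ∑ k ∈ Icc 1 n, 1 / ((δ - α) * k) := sum_congr rfl fun k _ => by
          rw [one_sub_div hδ.ne', inv_div]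
          field_simp
      _ = harmonic n / (δ - α) := sum_Icc_one_div_mul_eq_harmonic_div (δ - α) n
      _ ≤ (1 + Real.log n) / (δ - α) := by gcongr; exact harmonic_le_one_add_log n

/-- Logarithmic bounds on the mean extinction time of the constant-rate birth-death chain:
with `E[T_n] = ∑_{k=1}^n S_k` and `S_k = (1/(δk))·∑_{i=0}^∞ (k/(k+i))(α/δ)^i`,
`ln(n+1)/δ ≤ E[T_n] ≤ (1 + ln n)/(δ − α)`. -/
theorem extinction_time_log_bounds
    (δ α : ℝ) (hδ : 0 < δ) (hα : 0 < α) (hαδ : α < δ) (n : ℕ) (hn : 1 ≤ n) :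
    Real.log (n + 1) / δ ≤
      (∑ k ∈ Finset.Icc 1 n,
        (1 / (δ * k)) * ∑' i : ℕ, ((k : ℝ) / ((k : ℝ) + i)) * (α / δ) ^ i) ∧
    (∑ k ∈ Finset.Icc 1 n,
        (1 / (δ * k)) * ∑' i : ℕ, ((k : ℝ) / ((k : ℝ) + i)) * (α / δ) ^ i) ≤
      (1 + Real.log n) / (δ - α) :=
  extinction_time_log_bounds_general δ α hδ hα hαδ n
end

section
/- Let G be the adjacency matrix of a connected undirected graph on a finite vertex set, with spectral radius λ_r, and let q be the Perron–Frobenius eigenvector of G (so q has all entries strictly positive). Let β, β', δ > 0 with βλ_r + β' < δ, and let x : [0,∞) → ℝ^V solve the linear ODE x'(t) = (βG + β'I − δI)x(t) with nonnegative initial condition x(0). Then qᵀx(t) = e^{t(βλ_r + β' − δ)}·qᵀx(0), and hence 1ᵀx(t) ≤ e^{t(βλ_r+β'−δ)}·(q_max/q_min)·1ᵀx(0), where q_max and q_min are the largest and smallest entries of q. -/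
/-!
Since `G` is symmetric, `q` is also a left eigenvector of `A = βG + (β' - δ)I`, so the scalar
projection `y = qᵀx` solves `y' = (βλ_r + β' - δ) y` and is an exponential. For the bound on
`1ᵀx`, the off-diagonal entries of `A` are nonnegative, so `exp (tA)` is entrywise nonnegative
for `t ≥ 0`; as `x(t) = exp (tA) x(0)` by uniqueness of solutions, `x(t) ≥ 0`, and then
`q_min 1ᵀx(t) ≤ qᵀx(t)` and `qᵀx(0) ≤ q_max 1ᵀx(0)`.
-/

open Matrix Set

theorem eq_exp_mul_smul_of_hasDerivAt {E : Type*} [NormedAddCommGroup E] [NormedSpace ℝ E]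
    {f : ℝ → E} {c T : ℝ} (hT : 0 ≤ T) (hf : ∀ t ∈ Icc 0 T, HasDerivAt f (c • f t) t) :
    f T = Real.exp (T * c) • f 0 := by
  have hg : ∀ t, HasDerivAt (fun s => Real.exp (s * c) • f 0)
      (c • Real.exp (t * c) • f 0) t := fun t => by
    simpa [smul_smul, mul_comm] using (hasDerivAt_mul_const c).exp.smul_const (f 0)
  refine ODE_solution_unique (v := fun _ y => c • y) (fun _ => lipschitzWith_smul c)
    (fun t ht => (hf t ht).continuousAt.continuousWithinAt)
    (fun t ht => (hf t (Ico_subset_Icc_self ht)).hasDerivWithinAt)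
    (fun t _ => (hg t).continuousAt.continuousWithinAt)
    (fun t _ => (hg t).hasDerivWithinAt) (by simp) ⟨hT, le_rfl⟩

namespace Matrix

variable {n : Type*} [Fintype n]

theorem dotProduct_eq_exp_mul_of_hasDerivAt_mulVec {A : Matrix n n ℝ} {q : n → ℝ} {μ : ℝ}
    (hq : q ᵥ* A = μ • q) {x : ℝ → n → ℝ} {T : ℝ} (hT : 0 ≤ T)
    (hx : ∀ t ∈ Icc 0 T, HasDerivAt x (A *ᵥ x t) t) :
    q ⬝ᵥ x T = Real.exp (T * μ) * q ⬝ᵥ x 0 := by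
  refine eq_exp_mul_smul_of_hasDerivAt (f := fun t => q ⬝ᵥ x t) hT fun t ht => ?_
  have hqx : HasDerivAt (fun t => q ⬝ᵥ x t) (q ⬝ᵥ (A *ᵥ x t)) t :=
    HasDerivAt.fun_sum fun i _ => ((hasDerivAt_pi.1 (hx t ht)) i).const_mul (q i)
  rwa [dotProduct_mulVec, hq, smul_dotProduct] at hqx

variable [DecidableEq n]

attribute [local instance] Matrix.linftyOpNormedRing Matrix.linftyOpNormedAlgebra

theorem exp_apply_nonneg {M : Matrix n n ℝ} (hM : ∀ i j, 0 ≤ M i j) (i j : n) :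
    0 ≤ NormedSpace.exp M i j := by
  have hsum := NormedSpace.expSeries_summable' (𝕂 := ℝ) M
  have hexp : NormedSpace.exp M i j = ∑' k : ℕ, ((k.factorial : ℝ)⁻¹ • M ^ k) i j := by
    rw [NormedSpace.exp_eq_tsum ℝ]
    exact (congrFun (tsum_apply hsum) j).trans (tsum_apply (Pi.summable.1 hsum i))
  rw [hexp]
  exact tsum_nonneg fun k => mul_nonneg (by positivity) (pow_apply_nonneg hM k i j)

theorem exp_apply_nonneg_of_offDiag_nonneg {A : Matrix n n ℝ}
    (hA : ∀ i j, i ≠ j → 0 ≤ A i j) (i j : n) : 0 ≤ NormedSpace.exp A i j := by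
  -- `A + s I` is entrywise nonnegative, and the central shift only rescales `exp` by `e^{-s}`.
  set s : ℝ := ∑ k, |A k k|
  have hshift : ∀ k l, 0 ≤ (A + algebraMap ℝ _ s) k l := by
    intro k l
    rcases eq_or_ne k l with rfl | hkl
    · have : |A k k| ≤ s := Finset.single_le_sum (f := fun k => |A k k|)
        (fun _ _ => abs_nonneg _) (Finset.mem_univ k)
      simp only [add_apply, algebraMap_matrix_apply, if_true, Algebra.algebraMap_self,
        RingHom.id_apply]
      linarith [neg_abs_le (A k k)]
    · simpa [algebraMap_matrix_apply, hkl] using hA k l hkl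
  have hscalar : NormedSpace.exp (algebraMap ℝ (Matrix n n ℝ) (-s)) =
      algebraMap ℝ _ (Real.exp (-s)) := by
    rw [Real.exp_eq_exp_ℝ]
    exact (NormedSpace.algebraMap_exp_comm (-s)).symm
  have hsplit : NormedSpace.exp A =
      Real.exp (-s) • NormedSpace.exp (A + algebraMap ℝ _ s) := by
    conv_lhs => rw [← add_neg_cancel_right A (algebraMap ℝ _ s), ← map_neg]
    rw [exp_add_of_commute _ _ (Algebra.commute_algebraMap_right _ _), hscalar,
      ← Algebra.commutes, ← Algebra.smul_def]
  rw [hsplit, smul_apply, smul_eq_mul]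
  exact mul_nonneg (Real.exp_pos _).le (exp_apply_nonneg hshift i j)

theorem hasDerivAt_exp_smul_mulVec (A : Matrix n n ℝ) (v : n → ℝ) (t : ℝ) :
    HasDerivAt (fun s : ℝ => NormedSpace.exp (s • A) *ᵥ v)
      (A *ᵥ (NormedSpace.exp (t • A) *ᵥ v)) t := by
  rw [mulVec_mulVec]
  exact ((mulVecBilin ℝ ℝ).flip v).toContinuousLinearMap.hasFDerivAt.comp_hasDerivAt t
    (hasDerivAt_exp_smul_const' (𝕂 := ℝ) A t)

theorem eq_exp_smul_mulVec_of_hasDerivAt {A : Matrix n n ℝ} {x : ℝ → n → ℝ} {T : ℝ}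
    (hT : 0 ≤ T) (hx : ∀ t ∈ Icc 0 T, HasDerivAt x (A *ᵥ x t) t) :
    x T = NormedSpace.exp (T • A) *ᵥ x 0 := by
  have hg := hasDerivAt_exp_smul_mulVec A (x 0)
  refine ODE_solution_unique (v := fun _ y => A *ᵥ y)
    (K := ‖(mulVecLin A).toContinuousLinearMap‖₊)
    (fun _ => (mulVecLin A).toContinuousLinearMap.lipschitz)
    (fun t ht => (hx t ht).continuousAt.continuousWithinAt)
    (fun t ht => (hx t (Ico_subset_Icc_self ht)).hasDerivWithinAt)
    (fun t _ => (hg t).continuousAt.continuousWithinAt)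
    (fun t _ => (hg t).hasDerivWithinAt) (by simp) ⟨hT, le_rfl⟩

theorem apply_nonneg_of_hasDerivAt_mulVec {A : Matrix n n ℝ} (hA : ∀ i j, i ≠ j → 0 ≤ A i j)
    {x : ℝ → n → ℝ} {T : ℝ} (hT : 0 ≤ T) (hx : ∀ t ∈ Icc 0 T, HasDerivAt x (A *ᵥ x t) t)
    (hx0 : ∀ i, 0 ≤ x 0 i) (i : n) : 0 ≤ x T i := by
  have hTA : ∀ i j, i ≠ j → 0 ≤ (T • A) i j := fun i j hij => mul_nonneg hT (hA i j hij)
  rw [eq_exp_smul_mulVec_of_hasDerivAt hT hx]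
  exact Finset.sum_nonneg fun j _ =>
    mul_nonneg (exp_apply_nonneg_of_offDiag_nonneg hTA i j) (hx0 j)

end Matrix

section WeightedSum

variable {n R : Type*} [Fintype n] [Nonempty n] [CommSemiring R] [LinearOrder R]
  [IsOrderedRing R] {x : n → R}

theorem inf'_mul_sum_le_dotProduct (q : n → R) (hx : ∀ i, 0 ≤ x i) :
    Finset.univ.inf' Finset.univ_nonempty q * ∑ i, x i ≤ q ⬝ᵥ x := by
  rw [Finset.mul_sum]
  exact Finset.sum_le_sum fun i _ =>
    mul_le_mul_of_nonneg_right (Finset.inf'_le q (Finset.mem_univ i)) (hx i)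

theorem dotProduct_le_sup'_mul_sum (q : n → R) (hx : ∀ i, 0 ≤ x i) :
    q ⬝ᵥ x ≤ Finset.univ.sup' Finset.univ_nonempty q * ∑ i, x i := by
  rw [Finset.mul_sum]
  exact Finset.sum_le_sum fun i _ =>
    mul_le_mul_of_nonneg_right (Finset.le_sup' q (Finset.mem_univ i)) (hx i)

end WeightedSum

theorem eigen_projection_decay_general
    {V : Type*} [Fintype V] [Nonempty V]
    (G : Matrix V V ℝ) (hGsym : G.IsSymm) (hGadj : ∀ u v, G u v = 0 ∨ G u v = 1)
    (lamr : ℝ) (q : V → ℝ) (hq : ∀ v, 0 < q v) (heig : G.mulVec q = lamr • q)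
    (β β' δ : ℝ) (hβ : 0 < β)
    (x : ℝ → V → ℝ) (hx0 : ∀ v, 0 ≤ x 0 v)
    (hode : ∀ t : ℝ, 0 ≤ t → ∀ v, HasDerivAt (fun s => x s v)
      ((β • G.mulVec (x t) + β' • x t - δ • x t) v) t) :
    ∀ t : ℝ, 0 ≤ t →
      dotProduct q (x t) =
        Real.exp (t * (β * lamr + β' - δ)) * dotProduct q (x 0) ∧
      ∑ v, x t v ≤ Real.exp (t * (β * lamr + β' - δ)) *
        ((Finset.univ.sup' Finset.univ_nonempty q) /
          (Finset.univ.inf' Finset.univ_nonempty q)) * ∑ v, x 0 v := by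
  classical
  intro t ht
  set A : Matrix V V ℝ := β • G + (β' - δ) • 1
  have hx : ∀ s ∈ Icc 0 t, HasDerivAt x (A *ᵥ x s) s := fun s hs => by
    have hAx : A *ᵥ x s = β • G *ᵥ x s + β' • x s - δ • x s := by
      rw [add_mulVec, smul_mulVec, smul_mulVec, one_mulVec, sub_smul]
      abel
    exact hAx ▸ hasDerivAt_pi.2 (hode s hs.1)
  have hqA : q ᵥ* A = (β * lamr + β' - δ) • q := by
    rw [vecMul_add, vecMul_smul, vecMul_smul, vecMul_one, ← hGsym.eq, vecMul_transpose, heig,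
      smul_smul, ← add_smul]
    ring_nf
  have hA : ∀ i j, i ≠ j → 0 ≤ A i j := fun i j hij => by
    have hG : 0 ≤ G i j := by rcases hGadj i j with h | h <;> simp [h]
    simpa [A, one_apply_ne hij] using mul_nonneg hβ.le hG
  have hproj := dotProduct_eq_exp_mul_of_hasDerivAt_mulVec hqA ht hx
  have hxt : ∀ v, 0 ≤ x t v := apply_nonneg_of_hasDerivAt_mulVec hA ht hx hx0
  have hqmin : 0 < Finset.univ.inf' Finset.univ_nonempty q :=
    (Finset.lt_inf'_iff _).2 fun v _ => hq v
  refine ⟨hproj, ?_⟩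
  calc ∑ v, x t v ≤ q ⬝ᵥ x t / Finset.univ.inf' Finset.univ_nonempty q :=
        (le_div_iff₀' hqmin).2 (inf'_mul_sum_le_dotProduct q hxt)
    _ ≤ Real.exp (t * (β * lamr + β' - δ)) *
          (Finset.univ.sup' Finset.univ_nonempty q * ∑ v, x 0 v) /
          Finset.univ.inf' Finset.univ_nonempty q := by
        rw [hproj]
        gcongr
        exact dotProduct_le_sup'_mul_sum q hx0
    _ = _ := by ring

/-- Evolution of the expected epidemic along the Perron eigendirection: if
`x' = (βG + β'I − δI)x` with `x(0) ≥ 0`, `G` the (symmetric) adjacency matrix of a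
connected graph with Perron eigenvector `q ≻ 0` and spectral radius `λ_r`, then
`qᵀx(t) = e^{t(βλ_r+β'−δ)}·qᵀx(0)` and
`1ᵀx(t) ≤ e^{t(βλ_r+β'−δ)}·(q_max/q_min)·1ᵀx(0)`. -/
theorem eigen_projection_decay
    {V : Type*} [Fintype V] [DecidableEq V] [Nonempty V]
    (G : Matrix V V ℝ) (hGsym : G.IsSymm) (hGadj : ∀ u v, G u v = 0 ∨ G u v = 1)
    (lamr : ℝ) (q : V → ℝ) (hq : ∀ v, 0 < q v) (heig : G.mulVec q = lamr • q)
    (β β' δ : ℝ) (hβ : 0 < β) (hβ' : 0 < β') (hδ : 0 < δ)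
    (hthr : β * lamr + β' < δ)
    (x : ℝ → V → ℝ) (hx0 : ∀ v, 0 ≤ x 0 v)
    (hode : ∀ t : ℝ, 0 ≤ t → ∀ v, HasDerivAt (fun s => x s v)
      ((β • G.mulVec (x t) + β' • x t - δ • x t) v) t) :
    ∀ t : ℝ, 0 ≤ t →
      dotProduct q (x t) =
        Real.exp (t * (β * lamr + β' - δ)) * dotProduct q (x 0) ∧
      ∑ v, x t v ≤ Real.exp (t * (β * lamr + β' - δ)) *
        ((Finset.univ.sup' Finset.univ_nonempty q) /
          (Finset.univ.inf' Finset.univ_nonempty q)) * ∑ v, x 0 v :=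
  eigen_projection_decay_general G hGsym hGadj lamr q hq heig β β' δ hβ x hx0 hode
end

section
/- Let G be the adjacency matrix of a connected undirected graph with Perron eigenvector q ≻ 0 and spectral radius λ_r, let β, β', δ > 0 satisfy βλ_r + β' > δ, and let d_max be the maximum degree. For a state X ∈ ℕ^V with 1ᵀX = n ≥ 1, define the one-step expected drift of V(X) = qᵀX in the embedded jump chain: the chain moves to X + e_u with probability proportional to rate [βGX + β'X]_u and to X − e_u with probability proportional to δX_u, with total rate R = 1ᵀ(βGX + β'X + δX). Then E[V(X') − V(X)] = (1/R)(βλ_r + β' − δ)·qᵀX ≥ (βλ_r + β' − δ)·q_min/(β·d_max + β' + δ) > 0. -/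
open Matrix

/-- Positive drift of the Perron potential `V(X) = qᵀX` for the embedded jump chain when
`βλ_r + β' > δ`: the expected one-step change equals
`(1/R)(βλ_r + β' − δ)qᵀX` and is at least `(βλ_r + β' − δ)q_min/(β d_max + β' + δ) > 0`. -/
theorem embedded_chain_positive_drift
    {V : Type*} [Fintype V] [DecidableEq V] [Nonempty V]
    (G : Matrix V V ℝ) (hGsym : G.IsSymm) (hGadj : ∀ u v, G u v = 0 ∨ G u v = 1)
    (lamr : ℝ) (q : V → ℝ) (hq : ∀ v, 0 < q v) (heig : G.mulVec q = lamr • q)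
    (β β' δ : ℝ) (hβ : 0 < β) (hβ' : 0 < β') (hδ : 0 < δ)
    (hthr : δ < β * lamr + β')
    (X : V → ℕ) (hn : 1 ≤ ∑ u, X u) :
    (1 / (∑ u, (β * G.mulVec (fun v => (X v : ℝ)) u + β' * (X u : ℝ) + δ * (X u : ℝ)))) *
        (∑ u, q u * (β * G.mulVec (fun v => (X v : ℝ)) u + β' * (X u : ℝ) - δ * (X u : ℝ))) =
      (1 / (∑ u, (β * G.mulVec (fun v => (X v : ℝ)) u + β' * (X u : ℝ) + δ * (X u : ℝ)))) *
        ((β * lamr + β' - δ) * ∑ u, q u * (X u : ℝ)) ∧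
    (β * lamr + β' - δ) * (Finset.univ.inf' Finset.univ_nonempty q) /
        (β * (Finset.univ.sup' Finset.univ_nonempty fun u => ∑ v, G u v) + β' + δ) ≤
      (1 / (∑ u, (β * G.mulVec (fun v => (X v : ℝ)) u + β' * (X u : ℝ) + δ * (X u : ℝ)))) *
        (∑ u, q u * (β * G.mulVec (fun v => (X v : ℝ)) u + β' * (X u : ℝ) - δ * (X u : ℝ))) ∧
    0 < (1 / (∑ u, (β * G.mulVec (fun v => (X v : ℝ)) u + β' * (X u : ℝ) + δ * (X u : ℝ)))) *
        (∑ u, q u * (β * G.mulVec (fun v => (X v : ℝ)) u + β' * (X u : ℝ) - δ * (X u : ℝ))) := by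
  classical
  set Xr : V → ℝ := fun v => (X v : ℝ) with hXrdef
  have hXr : ∀ v, 0 ≤ Xr v := fun v => Nat.cast_nonneg _
  have hGnn : ∀ u v, 0 ≤ G u v := by
    intro u v; rcases hGadj u v with h | h <;> rw [h] <;> norm_num
  have hsym : ∀ u v, G u v = G v u := fun u v => by
    have := congrFun (congrFun hGsym u) v
    simpa [Matrix.transpose_apply] using this.symm
  set c : ℝ := β * lamr + β' - δ with hc
  have hcpos : 0 < c := by simp [hc]; linarith
  set qmin : ℝ := Finset.univ.inf' Finset.univ_nonempty q with hqmin
  have hqminpos : 0 < qmin := by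
    obtain ⟨v, _, hv⟩ := Finset.exists_mem_eq_inf' Finset.univ_nonempty q
    rw [hqmin, hv]; exact hq v
  have hqmin_le : ∀ v, qmin ≤ q v := fun v => Finset.inf'_le _ (Finset.mem_univ v)
  set dmax : ℝ := Finset.univ.sup' Finset.univ_nonempty fun u => ∑ v, G u v with hdmax
  have hdmax_le : ∀ u, (∑ v, G u v) ≤ dmax := fun u =>
    Finset.le_sup' (fun u => ∑ v, G u v) (Finset.mem_univ u)
  have hdmaxnn : 0 ≤ dmax := by
    obtain ⟨v⟩ := (inferInstance : Nonempty V)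
    exact le_trans (Finset.sum_nonneg fun w _ => hGnn v w) (hdmax_le v)
  set n : ℝ := ∑ u, Xr u with hndef
  have hn1 : (1 : ℝ) ≤ n := by
    rw [hndef]
    calc (1 : ℝ) ≤ ((∑ u, X u : ℕ) : ℝ) := by exact_mod_cast hn
    _ = ∑ u, Xr u := by push_cast [hXrdef]; rfl
  set R : ℝ := ∑ u, (β * G.mulVec Xr u + β' * Xr u + δ * Xr u) with hR
  set S : ℝ := ∑ u, q u * Xr u with hS
  have hmnn : ∀ u, 0 ≤ G.mulVec Xr u := fun u =>
    Finset.sum_nonneg fun v _ => mul_nonneg (hGnn u v) (hXr v)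
  have hSge : qmin * n ≤ S := by
    rw [hS, hndef, Finset.mul_sum]
    exact Finset.sum_le_sum fun v _ => mul_le_mul_of_nonneg_right (hqmin_le v) (hXr v)
  have hSpos : 0 < S := lt_of_lt_of_le (by nlinarith) hSge
  have hRpos : 0 < R := by
    rw [hR]
    calc (0:ℝ) < δ * n := by nlinarith
    _ = ∑ u, δ * Xr u := by rw [hndef, Finset.mul_sum]
    _ ≤ _ := Finset.sum_le_sum fun u _ => by
        have := hmnn u
        have := hXr u
        nlinarith
  set D : ℝ := β * dmax + β' + δ with hD
  have hDpos : 0 < D := by have := hdmaxnn; rw [hD]; nlinarith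
  have hRle : R ≤ D * n := by
    have hsum1 : ∑ u, G.mulVec Xr u ≤ dmax * n := by
      have : ∑ u, G.mulVec Xr u = ∑ v, (∑ u, G u v) * Xr v := by
        simp only [Matrix.mulVec, dotProduct]
        rw [Finset.sum_comm]
        exact Finset.sum_congr rfl fun v _ => by rw [Finset.sum_mul]
      rw [this, hndef, Finset.mul_sum]
      refine Finset.sum_le_sum fun v _ => mul_le_mul_of_nonneg_right ?_ (hXr v)
      calc ∑ u, G u v = ∑ u, G v u := Finset.sum_congr rfl fun u _ => hsym u v
      _ ≤ dmax := hdmax_le v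
    have hexp : R = β * (∑ u, G.mulVec Xr u) + (β' + δ) * n := by
      rw [hR, hndef, Finset.mul_sum, Finset.mul_sum, ← Finset.sum_add_distrib]
      exact Finset.sum_congr rfl fun u _ => by ring
    rw [hexp, hD]
    nlinarith
  have h1 : ∑ u, q u * G.mulVec Xr u = lamr * S := by
    have : ∑ u, q u * G.mulVec Xr u = ∑ v, G.mulVec q v * Xr v := by
      simp only [Matrix.mulVec, dotProduct, Finset.mul_sum]
      rw [Finset.sum_comm' (s := Finset.univ) (t := fun _ => Finset.univ)
        (t' := Finset.univ) (s' := fun _ => Finset.univ)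
        (f := fun u v => q u * (G u v * Xr v))]
      · exact Finset.sum_congr rfl fun v _ => by
          rw [Finset.sum_mul]
          exact Finset.sum_congr rfl fun u _ => by rw [hsym u v]; ring
      · simp
    rw [this, heig, hS, Finset.mul_sum]
    exact Finset.sum_congr rfl fun v _ => by simp [mul_assoc]
  have key : ∑ u, q u * (β * G.mulVec Xr u + β' * Xr u - δ * Xr u) = c * S := by
    have : ∑ u, q u * (β * G.mulVec Xr u + β' * Xr u - δ * Xr u)
        = β * (∑ u, q u * G.mulVec Xr u) + (β' - δ) * S := by
      rw [hS, Finset.mul_sum, Finset.mul_sum, ← Finset.sum_add_distrib]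
      exact Finset.sum_congr rfl fun u _ => by ring
    rw [this, h1, hc]; ring
  refine ⟨by rw [key], ?_, ?_⟩
  · rw [key, one_div, inv_mul_eq_div, div_le_div_iff₀ hDpos hRpos]
    nlinarith [mul_le_mul_of_nonneg_left hRle (le_of_lt hqminpos),
      mul_le_mul_of_nonneg_right hSge (le_of_lt hDpos)]
  · rw [key]
    positivity
end
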